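/- Let P be a poset, let 𝓤 be a join-specification of P and 𝓓 a meet-specification of P, all of whose members are finite. Then there exists a lattice F together with an order-embedding e : P → F that is a (𝓤, 𝓓)-morphism, such that for every lattice L and every (𝓤, 𝓓)-morphism f : P → L there is a unique lattice homomorphism u : F → L with u ∘ e = f. -/
import Mathlib


universe u

def IsOrdEmb {P X : Type u} [Preorder P] [Preorder X] (e : P → X) : Prop :=
  ∀ a b : P, e a ≤ e b ↔ a ≤ b

/-- `𝓤` is a join-specification of `P`: every member has a least upper bound in `P`,
and all singletons belong to `𝓤`. -/
def IsJoinSpec {P : Type u} [PartialOrder P] (𝓤 : Set (Set P)) : Prop :=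
  (∀ S ∈ 𝓤, ∃ j : P, IsLUB S j) ∧ ∀ p : P, {p} ∈ 𝓤

/-- `𝓓` is a meet-specification of `P`. -/
def IsMeetSpec {P : Type u} [PartialOrder P] (𝓓 : Set (Set P)) : Prop :=
  (∀ T ∈ 𝓓, ∃ m : P, IsGLB T m) ∧ ∀ p : P, {p} ∈ 𝓓

/-- A `(𝓤, 𝓓)`-morphism: a monotone map preserving the joins specified by `𝓤`
and the meets specified by `𝓓`. -/
def IsUDMorphism {P Q : Type u} [PartialOrder P] [PartialOrder Q]
    (𝓤 𝓓 : Set (Set P)) (f : P → Q) : Prop :=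
  Monotone f ∧
  (∀ S ∈ 𝓤, ∀ j : P, IsLUB S j → IsLUB (f '' S) (f j)) ∧
  (∀ T ∈ 𝓓, ∀ m : P, IsGLB T m → IsGLB (f '' T) (f m))

/-- `(F, e)` is the lattice freely generated by `P` while preserving joins from `𝓤`
and meets from `𝓓`. -/
def IsFreeLatticeOver {P : Type u} [PartialOrder P] (𝓤 𝓓 : Set (Set P))
    (F : Type u) [Lattice F] (e : P → F) : Prop :=
  IsOrdEmb e ∧ IsUDMorphism 𝓤 𝓓 e ∧
  ∀ (L : Type u) [Lattice L], ∀ f : P → L, IsUDMorphism 𝓤 𝓓 f →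
    ∃! u : F → L, (∀ a b : F, u (a ⊔ b) = u a ⊔ u b) ∧
      (∀ a b : F, u (a ⊓ b) = u a ⊓ u b) ∧ u ∘ e = f

namespace FreeLatAux

inductive Tm (P : Type u) : Type u
  | var : P → Tm P
  | sup : Tm P → Tm P → Tm P
  | inf : Tm P → Tm P → Tm P

variable {P : Type u} [PartialOrder P]

def eval {L : Type u} [Lattice L] (f : P → L) : Tm P → L
  | .var p => f p
  | .sup s t => eval f s ⊔ eval f t
  | .inf s t => eval f s ⊓ eval f t

def Le (𝓤 𝓓 : Set (Set P)) (s t : Tm P) : Prop :=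
  ∀ (L : Type u) (instL : Lattice L) (f : P → L),
    IsUDMorphism 𝓤 𝓓 f → @eval P L instL f s ≤ @eval P L instL f t

theorem Le.refl (𝓤 𝓓 : Set (Set P)) (s : Tm P) : Le 𝓤 𝓓 s s := fun _ _ _ _ => le_rfl

theorem Le.trans {𝓤 𝓓 : Set (Set P)} {s t r : Tm P} (h1 : Le 𝓤 𝓓 s t) (h2 : Le 𝓤 𝓓 t r) :
    Le 𝓤 𝓓 s r := fun L iL f hf => le_trans (h1 L iL f hf) (h2 L iL f hf)

def tmSetoid (𝓤 𝓓 : Set (Set P)) : Setoid (Tm P) where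
  r s t := Le 𝓤 𝓓 s t ∧ Le 𝓤 𝓓 t s
  iseqv := ⟨fun s => ⟨Le.refl _ _ s, Le.refl _ _ s⟩, fun h => ⟨h.2, h.1⟩,
    fun h1 h2 => ⟨h1.1.trans h2.1, h2.2.trans h1.2⟩⟩

def F (𝓤 𝓓 : Set (Set P)) : Type u := Quotient (tmSetoid 𝓤 𝓓)

def mk (𝓤 𝓓 : Set (Set P)) (t : Tm P) : F 𝓤 𝓓 := Quotient.mk (tmSetoid 𝓤 𝓓) t

instance (𝓤 𝓓 : Set (Set P)) : Lattice (F 𝓤 𝓓) where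
  le := Quotient.lift₂ (Le 𝓤 𝓓) (by
    intro a b a' b' ha hb
    exact propext ⟨fun h => ha.2.trans (h.trans hb.1), fun h => ha.1.trans (h.trans hb.2)⟩)
  le_refl := by rintro ⟨s⟩; exact Le.refl _ _ s
  le_trans := by rintro ⟨s⟩ ⟨t⟩ ⟨r⟩ h1 h2; exact Le.trans h1 h2
  le_antisymm := by rintro ⟨s⟩ ⟨t⟩ h1 h2; exact Quotient.sound ⟨h1, h2⟩
  sup := Quotient.map₂ Tm.sup (by
    intro a a' ha b b' hb
    constructor <;> intro L iL f hf <;> simp only [eval] <;>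
      exact sup_le_sup (by first | exact ha.1 L iL f hf | exact ha.2 L iL f hf)
        (by first | exact hb.1 L iL f hf | exact hb.2 L iL f hf))
  le_sup_left := by rintro ⟨s⟩ ⟨t⟩; intro L iL f hf; exact le_sup_left
  le_sup_right := by rintro ⟨s⟩ ⟨t⟩; intro L iL f hf; exact le_sup_right
  sup_le := by rintro ⟨s⟩ ⟨t⟩ ⟨r⟩ h1 h2; intro L iL f hf
               exact sup_le (h1 L iL f hf) (h2 L iL f hf)
  inf := Quotient.map₂ Tm.inf (by
    intro a a' ha b b' hb
    constructor <;> intro L iL f hf <;> simp only [eval] <;>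
      exact inf_le_inf (by first | exact ha.1 L iL f hf | exact ha.2 L iL f hf)
        (by first | exact hb.1 L iL f hf | exact hb.2 L iL f hf))
  inf_le_left := by rintro ⟨s⟩ ⟨t⟩; intro L iL f hf; exact inf_le_left
  inf_le_right := by rintro ⟨s⟩ ⟨t⟩; intro L iL f hf; exact inf_le_right
  le_inf := by rintro ⟨s⟩ ⟨t⟩ ⟨r⟩ h1 h2; intro L iL f hf
               exact le_inf (h1 L iL f hf) (h2 L iL f hf)

theorem mk_le_mk {𝓤 𝓓 : Set (Set P)} {s t : Tm P} :
    mk 𝓤 𝓓 s ≤ mk 𝓤 𝓓 t ↔ Le 𝓤 𝓓 s t := Iff.rfl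

theorem mk_sup {𝓤 𝓓 : Set (Set P)} (s t : Tm P) :
    mk 𝓤 𝓓 s ⊔ mk 𝓤 𝓓 t = mk 𝓤 𝓓 (Tm.sup s t) := rfl

theorem mk_inf {𝓤 𝓓 : Set (Set P)} (s t : Tm P) :
    mk 𝓤 𝓓 s ⊓ mk 𝓤 𝓓 t = mk 𝓤 𝓓 (Tm.inf s t) := rfl

/-! ### The detector lattice of 𝓤-ideals -/

def IsIdeal (𝓤 : Set (Set P)) (A : Set P) : Prop :=
  IsLowerSet A ∧ ∀ S ∈ 𝓤, S ⊆ A → ∀ j : P, IsLUB S j → j ∈ A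

def cl (𝓤 : Set (Set P)) (X : Set P) : Set P := ⋂₀ {A | IsIdeal 𝓤 A ∧ X ⊆ A}

theorem isIdeal_cl (𝓤 : Set (Set P)) (X : Set P) : IsIdeal 𝓤 (cl 𝓤 X) := by
  constructor
  · intro a b hab ha A hA
    exact hA.1.1 hab (ha A hA)
  · intro S hS hSA j hj A hA
    exact hA.1.2 S hS (fun s hs => hSA hs A hA) j hj

theorem subset_cl (𝓤 : Set (Set P)) (X : Set P) : X ⊆ cl 𝓤 X :=
  fun x hx A hA => hA.2 hx

theorem cl_min {𝓤 : Set (Set P)} {X A : Set P} (hA : IsIdeal 𝓤 A) (h : X ⊆ A) :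
    cl 𝓤 X ⊆ A := fun x hx => hx A ⟨hA, h⟩

def L1 (𝓤 : Set (Set P)) : Type u := {A : Set P // IsIdeal 𝓤 A}

instance (𝓤 : Set (Set P)) : Lattice (L1 𝓤) where
  le A B := A.1 ⊆ B.1
  le_refl A := subset_rfl
  le_trans A B C := Set.Subset.trans
  le_antisymm A B h1 h2 := Subtype.ext (Set.Subset.antisymm h1 h2)
  sup A B := ⟨cl 𝓤 (A.1 ∪ B.1), isIdeal_cl 𝓤 _⟩
  le_sup_left A B := Set.Subset.trans Set.subset_union_left (subset_cl 𝓤 _)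
  le_sup_right A B := Set.Subset.trans Set.subset_union_right (subset_cl 𝓤 _)
  sup_le A B C h1 h2 := cl_min C.2 (Set.union_subset h1 h2)
  inf A B := ⟨A.1 ∩ B.1, ⟨A.2.1.inter B.2.1,
    fun S hS hSA j hj => ⟨A.2.2 S hS (fun s hs => (hSA hs).1) j hj,
      B.2.2 S hS (fun s hs => (hSA hs).2) j hj⟩⟩⟩
  inf_le_left A B := Set.inter_subset_left
  inf_le_right A B := Set.inter_subset_right
  le_inf A B C h1 h2 := Set.subset_inter h1 h2

def emb (𝓤 : Set (Set P)) (p : P) : L1 𝓤 :=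
  ⟨{x | x ≤ p}, ⟨fun a b hab ha => le_trans hab ha,
    fun S _ hSA j hj => hj.2 (fun s hs => hSA hs)⟩⟩

theorem emb_le_emb {𝓤 : Set (Set P)} {a b : P} : emb 𝓤 a ≤ emb 𝓤 b ↔ a ≤ b :=
  ⟨fun h => h (le_refl a), fun h x hx => le_trans hx h⟩

theorem emb_udMorphism (𝓤 𝓓 : Set (Set P)) : IsUDMorphism 𝓤 𝓓 (emb 𝓤) := by
  refine ⟨fun a b hab => emb_le_emb.2 hab, ?_, ?_⟩
  · intro S hS j hj
    constructor
    · rintro x ⟨s, hs, rfl⟩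
      exact emb_le_emb.2 (hj.1 hs)
    · rintro C hC x hx
      have hSC : S ⊆ C.1 := fun s hs => hC ⟨s, hs, rfl⟩ (le_refl s)
      exact C.2.1 hx (C.2.2 S hS hSC j hj)
  · intro T hT m hm
    constructor
    · rintro x ⟨t, ht, rfl⟩
      exact emb_le_emb.2 (hm.1 ht)
    · rintro C hC x hx
      exact hm.2 (fun t ht => hC ⟨t, ht, rfl⟩ hx)

end FreeLatAux


open FreeLatAux in
/-- the free lattice generated by a poset `P` while preserving the (finitary)
joins from `𝓤` and meets from `𝓓` exists. -/
theorem free_lattice_exists {P : Type u} [PartialOrder P] (𝓤 𝓓 : Set (Set P))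
    (h𝓤 : IsJoinSpec 𝓤) (h𝓤fin : ∀ S ∈ 𝓤, S.Finite)
    (h𝓓 : IsMeetSpec 𝓓) (h𝓓fin : ∀ T ∈ 𝓓, T.Finite) :
    ∃ (F : Type u) (instF : Lattice F) (e : P → F),
      @IsFreeLatticeOver P _ 𝓤 𝓓 F instF e := by
  refine ⟨F 𝓤 𝓓, inferInstance, fun p => mk 𝓤 𝓓 (.var p), ?_, ⟨?_, ?_, ?_⟩, ?_⟩
  · -- order embedding
    intro a b
    constructor
    · intro h
      exact emb_le_emb.1 (h (L1 𝓤) inferInstance (emb 𝓤) (emb_udMorphism 𝓤 𝓓))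
    · intro h L iL f hf
      exact hf.1 h
  · -- monotone
    intro a b hab L iL f hf
    exact hf.1 hab
  · -- preserves 𝓤-joins
    intro S hS j hj
    constructor
    · rintro x ⟨s, hs, rfl⟩
      intro L iL f hf; exact hf.1 (hj.1 hs)
    · rintro ⟨t⟩ ht
      intro L iL f hf
      refine (hf.2.1 S hS j hj).2 ?_
      rintro y ⟨s, hs, rfl⟩
      exact ht ⟨s, hs, rfl⟩ L iL f hf
  · -- preserves 𝓓-meets
    intro T hT m hm
    constructor
    · rintro x ⟨t, ht, rfl⟩
      intro L iL f hf; exact hf.1 (hm.1 ht)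
    · rintro ⟨t⟩ ht
      intro L iL f hf
      refine (hf.2.2 T hT m hm).2 ?_
      rintro y ⟨s, hs, rfl⟩
      exact ht ⟨s, hs, rfl⟩ L iL f hf
  · -- universal property
    intro L iL f hf
    refine ⟨Quotient.lift (eval f)
      (fun s t h => le_antisymm (h.1 L iL f hf) (h.2 L iL f hf)), ⟨?_, ?_, ?_⟩, ?_⟩
    · rintro ⟨s⟩ ⟨t⟩; rfl
    · rintro ⟨s⟩ ⟨t⟩; rfl
    · rfl
    · rintro v ⟨hsup, hinf, hcomp⟩
      funext x
      induction x using Quotient.ind with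
      | _ t =>
        induction t with
        | var p => exact congrFun hcomp p
        | sup s t ihs iht =>
          have : mk 𝓤 𝓓 (Tm.sup s t) = mk 𝓤 𝓓 s ⊔ mk 𝓤 𝓓 t := rfl
          show v (mk 𝓤 𝓓 (Tm.sup s t)) = _
          rw [this, hsup]; exact congrArg₂ (· ⊔ ·) ihs iht
        | inf s t ihs iht =>
          have : mk 𝓤 𝓓 (Tm.inf s t) = mk 𝓤 𝓓 s ⊓ mk 𝓤 𝓓 t := rfl
          show v (mk 𝓤 𝓓 (Tm.inf s t)) = _
          rw [this, hinf]; exact congrArg₂ (· ⊓ ·) ihs iht
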